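/- arXiv:2401.16020 — 2 statements merged into one kernel-verified Lean document; each statement's English description precedes it below -/
import Mathlib

section
/- Let Φ be a parameter taking finitely many values φ with probabilities p(φ), encoded in an ensemble E_Φ of density matrices ρ_φ on ℂ^d, and let M be a projective measurement given by an orthonormal basis {|m⟩} of ℂ^d. Then the ensemble relative entropy of coherence equals the difference between the Holevo information of the ensemble and the mutual information between the parameter and the measurement outcome: C_M(E_Φ) = χ(E_Φ) − I(Φ;M). -/
open Matrix
open scoped ComplexOrder

/-- Von Neumann entropy `S(ρ) = -tr(ρ log ρ)`, computed as `∑ negMulLog λᵢ`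
over the eigenvalues of a Hermitian matrix (junk value `0` otherwise). -/
noncomputable def vNEntropy {n : Type*} [Fintype n] [DecidableEq n]
    (ρ : Matrix n n ℂ) : ℝ :=
  if h : ρ.IsHermitian then ∑ i, Real.negMulLog (h.eigenvalues i) else 0

/-- Shannon entropy of a finitely supported distribution. -/
noncomputable def shannonEntropy {ι : Type*} [Fintype ι] (p : ι → ℝ) : ℝ :=
  ∑ i, Real.negMulLog (p i)

/-- The state `ρ` decohered in the orthonormal basis `v`:
`Δ_M[ρ] = ∑ m ⟨m|ρ|m⟩ |m⟩⟨m|`. -/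
noncomputable def decohere {d : ℕ} (v : Fin d → Fin d → ℂ)
    (ρ : Matrix (Fin d) (Fin d) ℂ) : Matrix (Fin d) (Fin d) ℂ :=
  ∑ m, (star (v m) ⬝ᵥ ρ *ᵥ v m) • vecMulVec (v m) (star (v m))

/-- Relative entropy of coherence `C_M(ρ) = S(Δ_M[ρ]) - S(ρ)`. -/
noncomputable def relEntCoherence {d : ℕ} (v : Fin d → Fin d → ℂ)
    (ρ : Matrix (Fin d) (Fin d) ℂ) : ℝ :=
  vNEntropy (decohere v ρ) - vNEntropy ρ

/-!
Decohering `σ` in the basis `v` conjugates the diagonal matrix of outcome probabilities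
`⟨m|σ|m⟩` by the unitary with columns `v m`; since the spectrum is read off the characteristic
polynomial, `S(Δ_M[σ]) = H(M)`. The outcome distribution of `ρ_Φ` is the `p`-mixture of those of
the `ρ_φ`, so after these substitutions both sides consist of the same four terms.
-/

open Polynomial

namespace Matrix

variable {n : Type*}

theorem IsHermitian.sum_smul {ι : Type*} [Fintype ι] {ρ : ι → Matrix n n ℂ}
    (hρ : ∀ φ, (ρ φ).IsHermitian) (p : ι → ℝ) : (∑ φ, p φ • ρ φ).IsHermitian :=
  (isSelfAdjoint_sum _ fun φ _ => (IsSelfAdjoint.all (p φ)).smul (hρ φ).isSelfAdjoint).isHermitian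

variable [Fintype n]

theorem IsHermitian.coe_re_star_dotProduct_mulVec {A : Matrix n n ℂ} (hA : A.IsHermitian)
    (x : n → ℂ) : ((star x ⬝ᵥ A *ᵥ x).re : ℂ) = star x ⬝ᵥ A *ᵥ x :=
  Complex.ext rfl (by simpa using (hA.im_star_dotProduct_mulVec_self x).symm)

theorem re_star_dotProduct_sum_smul_mulVec {ι : Type*} [Fintype ι] (ρ : ι → Matrix n n ℂ)
    (p : ι → ℝ) (x : n → ℂ) :
    (star x ⬝ᵥ (∑ φ, p φ • ρ φ) *ᵥ x).re = ∑ φ, p φ * (star x ⬝ᵥ ρ φ *ᵥ x).re := by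
  simp [sum_mulVec, dotProduct_sum, smul_mulVec, Complex.re_sum]

variable [DecidableEq n]

theorem IsHermitian.sum_comp_eigenvalues_of_charpoly_eq {A : Matrix n n ℂ}
    (hA : A.IsHermitian) {c : n → ℝ} (h : A.charpoly = ∏ i, (X - C (c i : ℂ))) (f : ℝ → ℝ) :
    ∑ i, f (hA.eigenvalues i) = ∑ i, f (c i) := by
  have hroots : Finset.univ.val.map (fun i => (hA.eigenvalues i : ℂ)) =
      Finset.univ.val.map (fun i => (c i : ℂ)) := by
    have hc : (∏ i, (X - C (c i : ℂ))).roots = Finset.univ.val.map (fun i => (c i : ℂ)) := by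
      rw [roots_prod _ _ (Finset.prod_ne_zero_iff.mpr fun i _ => X_sub_C_ne_zero _)]
      simp
    rw [← hc, ← h, hA.roots_charpoly_eq_eigenvalues]
    rfl
  have := congrArg (fun s => (s.map (f ∘ Complex.re)).sum) hroots
  simp only [Multiset.map_map, Function.comp_def, Complex.ofReal_re] at this
  exact this

end Matrix

theorem vNEntropy_conj_diagonal {n : Type*} [Fintype n] [DecidableEq n] {W : Matrix n n ℂ}
    (hW : W ∈ unitaryGroup n ℂ) (c : n → ℝ) :
    vNEntropy (W * diagonal (fun i => (c i : ℂ)) * star W) = shannonEntropy c := by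
  have hD : (diagonal (fun i => (c i : ℂ))).IsHermitian :=
    isHermitian_diagonal_of_self_adjoint _ (funext fun i => Complex.conj_ofReal (c i))
  have hH : (W * diagonal (fun i => (c i : ℂ)) * star W).IsHermitian :=
    isHermitian_mul_mul_conjTranspose W hD
  have hchar : (W * diagonal (fun i => (c i : ℂ)) * star W).charpoly = ∏ i, (X - C (c i : ℂ)) := by
    rw [charpoly_mul_comm, ← Matrix.mul_assoc, mem_unitaryGroup_iff'.mp hW, Matrix.one_mul,
      charpoly_diagonal]
  rw [vNEntropy, dif_pos hH]
  exact hH.sum_comp_eigenvalues_of_charpoly_eq hchar _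

section Decohere

variable {d : ℕ} {v : Fin d → Fin d → ℂ}

theorem decohere_eq_mul_diagonal_mul (σ : Matrix (Fin d) (Fin d) ℂ) :
    decohere v σ = (of v)ᵀ * diagonal (fun m => star (v m) ⬝ᵥ σ *ᵥ v m) * star (of v)ᵀ := by
  ext i j
  simp only [decohere, Matrix.sum_apply, Matrix.smul_apply, vecMulVec_apply, Pi.star_apply,
    smul_eq_mul, mul_apply, transpose_apply, of_apply, diagonal_apply, mul_ite, mul_zero,
    Finset.sum_ite_eq', Finset.mem_univ, if_true, star_apply]
  exact Finset.sum_congr rfl fun m _ => by ring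

theorem transpose_of_mem_unitaryGroup_of_orthonormal
    (hv : ∀ i j, star (v i) ⬝ᵥ v j = if i = j then (1 : ℂ) else 0) :
    (of v)ᵀ ∈ unitaryGroup (Fin d) ℂ := by
  rw [mem_unitaryGroup_iff']
  ext m m'
  simpa [mul_apply, dotProduct, one_apply] using hv m m'

theorem vNEntropy_decohere (hv : ∀ i j, star (v i) ⬝ᵥ v j = if i = j then (1 : ℂ) else 0)
    {σ : Matrix (Fin d) (Fin d) ℂ} (hσ : σ.IsHermitian) :
    vNEntropy (decohere v σ) = shannonEntropy (fun m => (star (v m) ⬝ᵥ σ *ᵥ v m).re) := by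
  have hreal : (fun m => star (v m) ⬝ᵥ σ *ᵥ v m) = fun m => ((star (v m) ⬝ᵥ σ *ᵥ v m).re : ℂ) :=
    funext fun m => (hσ.coe_re_star_dotProduct_mulVec (v m)).symm
  rw [decohere_eq_mul_diagonal_mul, hreal]
  exact vNEntropy_conj_diagonal (transpose_of_mem_unitaryGroup_of_orthonormal hv) _

end Decohere

theorem cxi_equality_projective_general
    {d : ℕ} {ι : Type*} [Fintype ι]
    (p : ι → ℝ)
    (ρ : ι → Matrix (Fin d) (Fin d) ℂ)
    (hρpsd : ∀ φ, (ρ φ).PosSemidef)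
    (v : Fin d → Fin d → ℂ)
    (hv : ∀ i j, star (v i) ⬝ᵥ v j = if i = j then (1 : ℂ) else 0) :
    (∑ φ, p φ * relEntCoherence v (ρ φ))
        - relEntCoherence v (∑ φ, p φ • ρ φ)
      = (vNEntropy (∑ φ, p φ • ρ φ) - ∑ φ, p φ * vNEntropy (ρ φ))
        - (shannonEntropy (fun m => ∑ φ, p φ * (star (v m) ⬝ᵥ (ρ φ) *ᵥ v m).re)
            - ∑ φ, p φ * shannonEntropy (fun m => (star (v m) ⬝ᵥ (ρ φ) *ᵥ v m).re)) := by
  have hρ : ∀ φ, (ρ φ).IsHermitian := fun φ => (hρpsd φ).isHermitian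
  simp only [relEntCoherence, vNEntropy_decohere hv (hρ _),
    vNEntropy_decohere hv (IsHermitian.sum_smul hρ p), re_star_dotProduct_sum_smul_mulVec,
    mul_sub, Finset.sum_sub_distrib]
  ring

/-- **CXI equality for projective measurements.**
For a parameter `Φ` taking finitely many values `φ` with probabilities `p φ`,
encoded in density matrices `ρ φ` on `ℂ^d`, and a projective measurement given
by an orthonormal basis `v` of `ℂ^d`, the ensemble relative entropy of
coherence `C_M(E_Φ) = ∑ φ p(φ) C_M(ρ_φ) − C_M(ρ_Φ)` equals the Holevo
information `χ(E_Φ) = S(ρ_Φ) − ∑ φ p(φ) S(ρ_φ)` minus the mutual information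
`I(Φ;M) = H(M) − H(M|Φ)`. -/
theorem cxi_equality_projective
    {d : ℕ} {ι : Type*} [Fintype ι]
    (p : ι → ℝ) (hp0 : ∀ φ, 0 ≤ p φ) (hp1 : ∑ φ, p φ = 1)
    (ρ : ι → Matrix (Fin d) (Fin d) ℂ)
    (hρpsd : ∀ φ, (ρ φ).PosSemidef) (hρtr : ∀ φ, (ρ φ).trace = 1)
    (v : Fin d → Fin d → ℂ)
    (hv : ∀ i j, star (v i) ⬝ᵥ v j = if i = j then (1 : ℂ) else 0) :
    (∑ φ, p φ * relEntCoherence v (ρ φ))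
        - relEntCoherence v (∑ φ, p φ • ρ φ)
      = (vNEntropy (∑ φ, p φ • ρ φ) - ∑ φ, p φ * vNEntropy (ρ φ))
        - (shannonEntropy (fun m => ∑ φ, p φ * (star (v m) ⬝ᵥ (ρ φ) *ᵥ v m).re)
            - ∑ φ, p φ * shannonEntropy (fun m => (star (v m) ⬝ᵥ (ρ φ) *ᵥ v m).re)) :=
  cxi_equality_projective_general p ρ hρpsd v hv
end

section
/- Let M = {Π_j}_{j=1}^N be a projective measurement on ℂ^d, i.e. the Π_j are pairwise orthogonal self-adjoint projections with Σ_j Π_j = I, regarded as a POVM. Then for every density matrix ρ on ℂ^d the POVM coherence defined via the Naimark dilation coincides with the relative entropy of coherence: S(Σ_j M̃_j ρ̃ M̃_j) − S(ρ̃) = S(Σ_j Π_j ρ Π_j) − S(ρ). -/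
/-!
For a projective measurement the Naimark isometry `V` intertwines the two dephasings:
the `(j, k)` block of `V (∑ₗ Πₗ ρ Πₗ) V†` is `Πⱼ (∑ₗ Πₗ ρ Πₗ) Πₖ`, which is `Πⱼ ρ Πⱼ` for
`j = k` and vanishes otherwise, so it equals the block-diagonal part `∑ⱼ M̃ⱼ ρ̃ M̃ⱼ` of
`ρ̃ = V ρ V†`. Both terms of the POVM coherence are therefore conjugates by `V`, and
conjugation by an isometry preserves the von Neumann entropy: by Sylvester's identity
`X^d · χ(V A V†) = X^(dN) · χ(A)`, the spectrum of `V A V†` is that of `A` padded with zeros,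
which contribute `negMulLog 0 = 0`.
-/

open Matrix
open scoped ComplexOrder Kronecker

/-- The Naimark dilation `V = ∑ⱼ Mⱼ ⊗ |j⟩` of a POVM `{Mⱼ}`, as a matrix from
`ℂ^d` to `ℂ^d ⊗ ℂ^N`: it sends `|ψ⟩` to `∑ⱼ (Mⱼ|ψ⟩) ⊗ |j⟩`. -/
def naimark {d N : ℕ} (M : Fin N → Matrix (Fin d) (Fin d) ℂ) :
    Matrix (Fin d × Fin N) (Fin d) ℂ :=
  fun q k => M q.2 q.1 k

/-- The dilated projector `M̃ⱼ = I ⊗ |j⟩⟨j|` on `ℂ^d ⊗ ℂ^N`. -/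
def dilProj (d : ℕ) {N : ℕ} (j : Fin N) :
    Matrix (Fin d × Fin N) (Fin d × Fin N) ℂ :=
  (1 : Matrix (Fin d) (Fin d) ℂ) ⊗ₖ single j j 1

/-- The dilated state `ρ̃ = V ρ V†`. -/
noncomputable def dilate {d N : ℕ} (M : Fin N → Matrix (Fin d) (Fin d) ℂ)
    (ρ : Matrix (Fin d) (Fin d) ℂ) : Matrix (Fin d × Fin N) (Fin d × Fin N) ℂ :=
  naimark M * ρ * (naimark M)ᴴ

/-- The POVM coherence `C_M(ρ) = S(∑ⱼ M̃ⱼ ρ̃ M̃ⱼ) − S(ρ̃)` of `ρ` relative to the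
POVM `{Mⱼ}`, defined through the Naimark dilation. -/
noncomputable def povmCoherence {d N : ℕ} (M : Fin N → Matrix (Fin d) (Fin d) ℂ)
    (ρ : Matrix (Fin d) (Fin d) ℂ) : ℝ :=
  vNEntropy (∑ j, dilProj d j * dilate M ρ * dilProj d j) - vNEntropy (dilate M ρ)

open Polynomial

section Entropy

variable {m n : Type*} [Fintype m] [Fintype n] [DecidableEq n]

lemma vNEntropy_eq_sum_roots_charpoly {A : Matrix n n ℂ} (hA : A.IsHermitian) :
    vNEntropy A = (A.charpoly.roots.map fun z => Real.negMulLog z.re).sum := by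
  rw [vNEntropy, dif_pos hA, hA.roots_charpoly_eq_eigenvalues, Multiset.map_map,
    Finset.sum_eq_multiset_sum]
  simp [Function.comp_def]

lemma sum_map_negMulLog_roots_eq_of_X_pow_mul_eq {p q : ℂ[X]} (hp : p ≠ 0) (hq : q ≠ 0)
    {a b : ℕ} (h : X ^ a * p = X ^ b * q) :
    (p.roots.map fun z => Real.negMulLog z.re).sum
      = (q.roots.map fun z => Real.negMulLog z.re).sum := by
  have hroots := congrArg roots h
  rw [roots_mul (mul_ne_zero (pow_ne_zero _ X_ne_zero) hp),
    roots_mul (mul_ne_zero (pow_ne_zero _ X_ne_zero) hq), roots_X_pow, roots_X_pow] at hroots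
  simpa [Multiset.map_nsmul, Multiset.sum_nsmul] using
    congrArg (fun s : Multiset ℂ => (s.map fun z => Real.negMulLog z.re).sum) hroots

lemma isHermitian_mul_mul_conjTranspose_iff {V : Matrix m n ℂ} (hV : Vᴴ * V = 1)
    {A : Matrix n n ℂ} : (V * A * Vᴴ).IsHermitian ↔ A.IsHermitian := by
  refine ⟨fun h => ?_, isHermitian_mul_mul_conjTranspose V⟩
  have hA : Vᴴ * (V * A * Vᴴ) * V = A := by
    rw [← Matrix.mul_assoc, ← Matrix.mul_assoc, hV, Matrix.one_mul, Matrix.mul_assoc, hV,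
      Matrix.mul_one]
  simpa only [hA] using isHermitian_conjTranspose_mul_mul V h

lemma vNEntropy_mul_mul_conjTranspose [DecidableEq m] {V : Matrix m n ℂ} (hV : Vᴴ * V = 1)
    (A : Matrix n n ℂ) : vNEntropy (V * A * Vᴴ) = vNEntropy A := by
  by_cases hA : A.IsHermitian
  · rw [vNEntropy_eq_sum_roots_charpoly hA,
      vNEntropy_eq_sum_roots_charpoly ((isHermitian_mul_mul_conjTranspose_iff hV).mpr hA)]
    refine sum_map_negMulLog_roots_eq_of_X_pow_mul_eq (charpoly_monic _).ne_zero
      (charpoly_monic _).ne_zero (a := Fintype.card n) (b := Fintype.card m) ?_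
    rw [charpoly_mul_comm' (V * A) Vᴴ, ← Matrix.mul_assoc, hV, Matrix.one_mul]
  · have hVA : ¬(V * A * Vᴴ).IsHermitian := (isHermitian_mul_mul_conjTranspose_iff hV).not.mpr hA
    simp [vNEntropy, hA, hVA]

end Entropy

section Dilation

variable {d N : ℕ}

lemma naimark_conjTranspose_mul_self (M : Fin N → Matrix (Fin d) (Fin d) ℂ) :
    (naimark M)ᴴ * naimark M = ∑ j, (M j)ᴴ * M j := by
  ext k l
  rw [Matrix.mul_apply, Fintype.sum_prod_type, Finset.sum_comm]
  simp [naimark, Matrix.sum_apply, Matrix.mul_apply]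

lemma dilate_apply (M : Fin N → Matrix (Fin d) (Fin d) ℂ) (ρ : Matrix (Fin d) (Fin d) ℂ)
    (a b : Fin d) (j k : Fin N) :
    dilate M ρ (a, j) (b, k) = (M j * ρ * (M k)ᴴ) a b := by
  simp [dilate, naimark, Matrix.mul_apply]

lemma dilProj_eq_diagonal (j : Fin N) :
    dilProj d j = diagonal fun q => if q.2 = j then 1 else 0 := by
  ext ⟨a, m⟩ ⟨b, n⟩
  simp only [dilProj, kroneckerMap_apply, one_apply, single_apply, diagonal_apply, Prod.mk.injEq]
  grind

lemma sum_dilProj_mul_mul_dilProj_apply (X : Matrix (Fin d × Fin N) (Fin d × Fin N) ℂ)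
    (a b : Fin d) (m n : Fin N) :
    (∑ j, dilProj d j * X * dilProj d j : Matrix _ _ ℂ) (a, m) (b, n)
      = if m = n then X (a, m) (b, n) else 0 := by
  simp only [dilProj_eq_diagonal, Matrix.sum_apply, diagonal_mul, mul_diagonal, ite_mul,
    one_mul, zero_mul, mul_ite, mul_one, mul_zero]
  by_cases h : m = n
  · subst h; simp
  · simp [h]

lemma mul_sum_mul_mul_of_orthogonal (P : Fin N → Matrix (Fin d) (Fin d) ℂ)
    (hPorth : ∀ j k, P j * P k = if j = k then P j else 0) (ρ : Matrix (Fin d) (Fin d) ℂ)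
    (m n : Fin N) :
    P m * (∑ l, P l * ρ * P l) * P n = if m = n then P m * ρ * P m else 0 := by
  have hterm : ∀ l, P m * (P l * ρ * P l) * P n = (P m * P l) * ρ * (P l * P n) := by
    intro l; simp only [Matrix.mul_assoc]
  simp only [Matrix.mul_sum, Matrix.sum_mul, hterm, hPorth]
  by_cases h : m = n
  · subst h; simp
  · simp [h]

lemma sum_dilProj_mul_dilate_mul_dilProj (P : Fin N → Matrix (Fin d) (Fin d) ℂ)
    (hPorth : ∀ j k, P j * P k = if j = k then P j else 0) (hPsa : ∀ j, (P j)ᴴ = P j)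
    (ρ : Matrix (Fin d) (Fin d) ℂ) :
    ∑ j, dilProj d j * dilate P ρ * dilProj d j = dilate P (∑ j, P j * ρ * P j) := by
  ext ⟨a, m⟩ ⟨b, n⟩
  simp only [sum_dilProj_mul_mul_dilProj_apply, dilate_apply, hPsa]
  rw [mul_sum_mul_mul_of_orthogonal P hPorth]
  split_ifs with h
  · subst h; rfl
  · rfl

end Dilation

theorem povmCoherence_of_projective_general
    {d N : ℕ} (P : Fin N → Matrix (Fin d) (Fin d) ℂ)
    (hPorth : ∀ j k, P j * P k = if j = k then P j else 0)
    (hPsa : ∀ j, (P j)ᴴ = P j)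
    (hPsum : ∑ j, P j = 1)
    (ρ : Matrix (Fin d) (Fin d) ℂ) :
    vNEntropy (∑ j, dilProj d j * dilate P ρ * dilProj d j)
        - vNEntropy (dilate P ρ)
      = vNEntropy (∑ j, P j * ρ * P j) - vNEntropy ρ := by
  have hV : (naimark P)ᴴ * naimark P = 1 := by
    simpa [naimark_conjTranspose_mul_self, hPsa, hPorth] using hPsum
  rw [sum_dilProj_mul_dilate_mul_dilProj P hPorth hPsa, dilate, dilate,
    vNEntropy_mul_mul_conjTranspose hV, vNEntropy_mul_mul_conjTranspose hV]

/-- For a projective measurement `{Πⱼ}` (pairwise orthogonal self-adjoint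
projections summing to the identity), regarded as a POVM, the POVM coherence
defined via the Naimark dilation coincides with the relative entropy of
coherence: `S(∑ⱼ M̃ⱼ ρ̃ M̃ⱼ) − S(ρ̃) = S(∑ⱼ Πⱼ ρ Πⱼ) − S(ρ)`. -/
theorem povmCoherence_of_projective
    {d N : ℕ} (P : Fin N → Matrix (Fin d) (Fin d) ℂ)
    (hPorth : ∀ j k, P j * P k = if j = k then P j else 0)
    (hPsa : ∀ j, (P j)ᴴ = P j)
    (hPsum : ∑ j, P j = 1)
    (ρ : Matrix (Fin d) (Fin d) ℂ)
    (hρpsd : ρ.PosSemidef) (hρtr : ρ.trace = 1) :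
    vNEntropy (∑ j, dilProj d j * dilate P ρ * dilProj d j)
        - vNEntropy (dilate P ρ)
      = vNEntropy (∑ j, P j * ρ * P j) - vNEntropy ρ :=
  povmCoherence_of_projective_general P hPorth hPsa hPsum ρ
end
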